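/- arXiv:2402.00528 — 10 statements merged into one kernel-verified Lean document; each statement's English description precedes it below -/
import Mathlib

section
/- Let (B, ≺, ◇) be a finitely additive modal contact algebra and define □a := ¬◇¬a. Then the following condition holds: for all x, z ∈ B, if □y ≤ z for every y with y ≺ x, then □x ≤ z — if and only if ◇ is upper continuous, i.e., for each a ∈ B the infimum of the set {◇b : a ≺ b} exists in B and equals ◇a. -/
/-!
Since `≺` is self-dual under complementation (`a ≺ b ↔ ¬b ≺ ¬a`), the family `{◇b : a ≺ b}` is
`{◇¬y : y ≺ ¬a}`, so after complementing, "`z` bounds every `□y` with `y ≺ x`" says exactly that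
`¬z` is a lower bound of `{◇b : ¬x ≺ b}`. The box condition at `x` is thus the statement that
`◇¬x` is above all such lower bounds, while `◇a` is always a lower bound itself, because `◇`
preserves `≺` and `≺ ⊆ ≤`.
-/

/-- A contact algebra: a Boolean algebra `B` with a binary relation `prec`
satisfying (S1)-(S6). -/
structure ContactAlgebra (B : Type*) [BooleanAlgebra B] where
  prec : B → B → Prop
  s1_bot : prec ⊥ ⊥
  s1_top : prec ⊤ ⊤
  s2 : ∀ a b c : B, prec a b → prec a c → prec a (b ⊓ c)
  s3 : ∀ a b c : B, prec a c → prec b c → prec (a ⊔ b) c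
  s4 : ∀ a b c d : B, a ≤ b → prec b c → c ≤ d → prec a d
  s5 : ∀ a b : B, prec a b → a ≤ b
  s6 : ∀ a b : B, prec a b → prec bᶜ aᶜ

namespace ContactAlgebra

variable {B : Type*} [BooleanAlgebra B] (C : ContactAlgebra B)

theorem mem_lowerBounds_image_prec_iff (D : B → B) (a w : B) :
    w ∈ lowerBounds {d | ∃ b, C.prec a b ∧ d = D b} ↔ ∀ y, C.prec y aᶜ → (D yᶜ)ᶜ ≤ wᶜ := by
  simp only [mem_lowerBounds, Set.mem_ofPred_eq, compl_le_compl_iff_le]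
  constructor
  · intro hw y hy
    exact hw _ ⟨yᶜ, by simpa using C.s6 _ _ hy, rfl⟩
  · rintro hw _ ⟨b, hab, rfl⟩
    simpa using hw bᶜ (C.s6 _ _ hab)

theorem mem_lowerBounds_image_prec {D : B → B} (hD : ∀ a b, C.prec a b → C.prec (D a) (D b))
    (a : B) : D a ∈ lowerBounds {d | ∃ b, C.prec a b ∧ d = D b} := by
  rintro _ ⟨b, hab, rfl⟩
  exact C.s5 _ _ (hD _ _ hab)

end ContactAlgebra

theorem box_lowerCont_iff_diamond_upperCont_general
    {B : Type*} [BooleanAlgebra B] (C : ContactAlgebra B) (D : B → B)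
    (hDprox : ∀ a b : B, C.prec a b → C.prec (D a) (D b)) :
    (∀ x z : B, (∀ y : B, C.prec y x → (D yᶜ)ᶜ ≤ z) → (D xᶜ)ᶜ ≤ z) ↔
    (∀ a : B, IsGLB {d : B | ∃ b : B, C.prec a b ∧ d = D b} (D a)) := by
  constructor
  · intro hbox a
    refine ⟨C.mem_lowerBounds_image_prec hDprox a, fun w hw => ?_⟩
    simpa using hbox aᶜ wᶜ ((C.mem_lowerBounds_image_prec_iff D a w).1 hw)
  · intro hglb x z h
    rw [compl_le_iff_compl_le]
    exact (hglb xᶜ).2 ((C.mem_lowerBounds_image_prec_iff D xᶜ zᶜ).2 (by simpa using h))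

/-- On a finitely additive modal contact algebra `(B, ≺, ◇)`, with `□a := ¬◇¬a`,
the condition `∀ x z, (∀ y, y ≺ x → □y ≤ z) → □x ≤ z` holds iff `◇` is upper
continuous, i.e. for each `a` the infimum of `{◇b : a ≺ b}` exists and equals `◇a`. -/
theorem box_lowerCont_iff_diamond_upperCont
    {B : Type*} [BooleanAlgebra B] (C : ContactAlgebra B) (D : B → B)
    (hD0 : D ⊥ = ⊥) (hDadd : ∀ a b : B, D (a ⊔ b) = D a ⊔ D b)
    (hDprox : ∀ a b : B, C.prec a b → C.prec (D a) (D b)) :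
    (∀ x z : B, (∀ y : B, C.prec y x → (D yᶜ)ᶜ ≤ z) → (D xᶜ)ᶜ ≤ z) ↔
    (∀ a : B, IsGLB {d : B | ∃ b : B, C.prec a b ∧ d = D b} (D a)) :=
  box_lowerCont_iff_diamond_upperCont_general C D hDprox
end

section
/- Let (B, ≺, ◇) be an upper continuous modal compingent algebra, let C be a complete Boolean algebra, and let e : B → C be an injective Boolean algebra homomorphism whose image is both join-dense and meet-dense in C (so that C is the MacNeille completion of B). Define on C: α ≺' β iff there exist a, b ∈ B with a ≺ b, α ≤ e(a), and e(b) ≤ β; and ◇'α := inf{ e(◇a) : a ∈ B, α ≤ e(a) }. Then (C, ≺', ◇') is an upper continuous modal de Vries algebra (i.e., (C, ≺') is a de Vries algebra, ◇' is de Vries additive, and ◇' is upper continuous), and moreover for all a, b ∈ B: a ≺ b if and only if e(a) ≺' e(b), and ◇'(e(a)) = e(◇a). -/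
/-- A compingent algebra: a contact algebra satisfying (S7) and (S8). -/
structure CompingentAlgebra (B : Type*) [BooleanAlgebra B] extends ContactAlgebra B where
  s7 : ∀ a b : B, prec a b → ∃ c : B, prec a c ∧ prec c b
  s8 : ∀ a : B, a ≠ ⊥ → ∃ b : B, b ≠ ⊥ ∧ prec b a

/-- The proximity on the MacNeille completion:
`α ≺' β` iff there are `a ≺ b` in `B` with `α ≤ e a` and `e b ≤ β`. -/
def MacNeillePrec {B C : Type*} [BooleanAlgebra B] [CompleteBooleanAlgebra C]
    (prec : B → B → Prop) (e : B → C) (α β : C) : Prop :=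
  ∃ a b : B, prec a b ∧ α ≤ e a ∧ e b ≤ β

/-- The modal operator on the MacNeille completion:
`◇'α := inf { e (◇a) : a ∈ B, α ≤ e a }`. -/
noncomputable def MacNeilleDia {B C : Type*} [BooleanAlgebra B] [CompleteBooleanAlgebra C]
    (dia : B → B) (e : B → C) (α : C) : C :=
  sInf {x : C | ∃ a : B, α ≤ e a ∧ x = e (dia a)}

/-!
Everything on `C` is computed through `B`: a witness of `α ≺' β` is a pair `a ≺ b` in `B` squeezed
between `α` and `β`, so the proximity axioms transfer along the lattice homomorphism `e`. Join-density
provides nonzero elements of `B` below nonzero elements of `C` (for (S8)) and makes `e` preserve all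
infima that exist in `B`; with `◇'(e a) = e(◇a)` the latter turns upper continuity of `◇` into upper
continuity of `◇'`.
-/

section

variable {B C : Type*} {e : B → C}

theorem map_le_map_iff_of_injective_of_map_inf [SemilatticeInf B] [SemilatticeInf C]
    (hinj : Function.Injective e) (hinf : ∀ a b : B, e (a ⊓ b) = e a ⊓ e b) (a b : B) :
    e a ≤ e b ↔ a ≤ b := by
  rw [← inf_eq_left, ← hinf, hinj.eq_iff, inf_eq_left]

theorem le_of_forall_map_le [CompleteLattice C]
    (hdense : ∀ γ : C, γ = sSup {x : C | (∃ a : B, x = e a) ∧ x ≤ γ})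
    {γ δ : C} (h : ∀ a : B, e a ≤ γ → e a ≤ δ) : γ ≤ δ := by
  rw [hdense γ]
  exact sSup_le fun _ ⟨⟨a, hx⟩, ha⟩ => hx ▸ h a (hx ▸ ha)

theorem le_map_of_isGLB [Preorder B] [CompleteLattice C]
    (hdense : ∀ γ : C, γ = sSup {x : C | (∃ a : B, x = e a) ∧ x ≤ γ})
    (he : ∀ a b : B, e a ≤ e b ↔ a ≤ b) {S : Set B} {b : B} (hb : IsGLB S b) {γ : C}
    (hγ : ∀ s ∈ S, γ ≤ e s) : γ ≤ e b :=
  le_of_forall_map_le hdense fun a ha =>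
    (he a b).2 <| hb.2 fun s hs => (he a s).1 (ha.trans (hγ s hs))

variable [BooleanAlgebra B] [CompleteBooleanAlgebra C]

theorem ContactAlgebra.monotone_of_isGLB (A : ContactAlgebra B) {dia : B → B}
    (hdia : ∀ a : B, IsGLB {d : B | ∃ b : B, A.prec a b ∧ d = dia b} (dia a)) : Monotone dia :=
  fun a b hab => (hdia b).2 fun _ ⟨c, hbc, hd⟩ => (hdia a).1 ⟨c, A.s4 a b c c hab hbc le_rfl, hd⟩

namespace MacNeillePrec

variable {prec : B → B → Prop} {α β γ δ : C}

theorem mono (hαβ : α ≤ β) (h : MacNeillePrec prec e β γ) (hγδ : γ ≤ δ) :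
    MacNeillePrec prec e α δ :=
  let ⟨a, b, hab, ha, hb⟩ := h
  ⟨a, b, hab, hαβ.trans ha, hb.trans hγδ⟩

theorem le (hprec : ∀ a b : B, prec a b → a ≤ b) (he : Monotone e)
    (h : MacNeillePrec prec e α β) : α ≤ β :=
  let ⟨a, b, hab, ha, hb⟩ := h
  ha.trans ((he (hprec a b hab)).trans hb)

theorem inf_right (A : ContactAlgebra B) (he : ∀ a b : B, e (a ⊓ b) = e a ⊓ e b)
    (hβ : MacNeillePrec A.prec e α β) (hγ : MacNeillePrec A.prec e α γ) :
    MacNeillePrec A.prec e α (β ⊓ γ) := by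
  obtain ⟨a₁, b₁, h₁, ha₁, hb₁⟩ := hβ
  obtain ⟨a₂, b₂, h₂, ha₂, hb₂⟩ := hγ
  refine ⟨a₁ ⊓ a₂, b₁ ⊓ b₂, ?_, he a₁ a₂ ▸ le_inf ha₁ ha₂, he b₁ b₂ ▸ inf_le_inf hb₁ hb₂⟩
  exact A.s2 _ _ _ (A.s4 _ _ _ _ inf_le_left h₁ le_rfl) (A.s4 _ _ _ _ inf_le_right h₂ le_rfl)

theorem sup_left (A : ContactAlgebra B) (he : ∀ a b : B, e (a ⊔ b) = e a ⊔ e b)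
    (hα : MacNeillePrec A.prec e α γ) (hβ : MacNeillePrec A.prec e β γ) :
    MacNeillePrec A.prec e (α ⊔ β) γ := by
  obtain ⟨a₁, b₁, h₁, ha₁, hb₁⟩ := hα
  obtain ⟨a₂, b₂, h₂, ha₂, hb₂⟩ := hβ
  refine ⟨a₁ ⊔ a₂, b₁ ⊔ b₂, ?_, he a₁ a₂ ▸ sup_le_sup ha₁ ha₂, he b₁ b₂ ▸ sup_le hb₁ hb₂⟩
  exact A.s3 _ _ _ (A.s4 _ _ _ _ le_rfl h₁ le_sup_left) (A.s4 _ _ _ _ le_rfl h₂ le_sup_right)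

theorem compl (A : ContactAlgebra B) (he : ∀ a : B, e aᶜ = (e a)ᶜ)
    (h : MacNeillePrec A.prec e α β) : MacNeillePrec A.prec e βᶜ αᶜ :=
  let ⟨a, b, hab, ha, hb⟩ := h
  ⟨bᶜ, aᶜ, A.s6 a b hab, he b ▸ compl_le_compl hb, he a ▸ compl_le_compl ha⟩

theorem exists_between (A : CompingentAlgebra B) (h : MacNeillePrec A.prec e α β) :
    ∃ γ : C, MacNeillePrec A.prec e α γ ∧ MacNeillePrec A.prec e γ β :=
  let ⟨a, b, hab, ha, hb⟩ := h
  let ⟨c, hac, hcb⟩ := A.s7 a b hab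
  ⟨e c, ⟨a, c, hac, ha, le_rfl⟩, ⟨c, b, hcb, le_rfl, hb⟩⟩

end MacNeillePrec

theorem exists_ne_bot_macNeillePrec (A : CompingentAlgebra B) (hinj : Function.Injective e)
    (hbot : e ⊥ = ⊥) (hdense : ∀ γ : C, γ = sSup {x : C | (∃ a : B, x = e a) ∧ x ≤ γ})
    {α : C} (hα : α ≠ ⊥) : ∃ β : C, β ≠ ⊥ ∧ MacNeillePrec A.prec e β α := by
  obtain ⟨a, haα, ha⟩ : ∃ a : B, e a ≤ α ∧ a ≠ ⊥ := by
    by_contra! h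
    exact hα <| le_bot_iff.1 <| le_of_forall_map_le hdense fun a ha => by
      rw [h a ha, hbot]
  obtain ⟨b, hb, hba⟩ := A.s8 a ha
  exact ⟨e b, fun h => hb (hinj (h.trans hbot.symm)), b, a, hba, le_rfl, haα⟩

theorem macNeillePrec_map_map_iff (A : ContactAlgebra B) (he : ∀ a b : B, e a ≤ e b ↔ a ≤ b)
    (a b : B) : MacNeillePrec A.prec e (e a) (e b) ↔ A.prec a b :=
  ⟨fun ⟨a', b', h, ha, hb⟩ => A.s4 a a' b' b ((he a a').1 ha) h ((he b' b).1 hb),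
    fun h => ⟨a, b, h, le_rfl, le_rfl⟩⟩

section MacNeilleDia

variable {dia : B → B}

theorem MacNeilleDia.monotone : Monotone (MacNeilleDia dia e) :=
  fun _ _ h => le_sInf fun _ ⟨c, hc, hx⟩ => sInf_le ⟨c, h.trans hc, hx⟩

theorem macNeilleDia_le_map {α : C} {a : B} (h : α ≤ e a) : MacNeilleDia dia e α ≤ e (dia a) :=
  sInf_le ⟨a, h, rfl⟩

theorem macNeilleDia_map (hdia : Monotone dia) (he : ∀ a b : B, e a ≤ e b ↔ a ≤ b) (a : B) :
    MacNeilleDia dia e (e a) = e (dia a) :=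
  (macNeilleDia_le_map le_rfl).antisymm <| le_sInf fun _ ⟨c, hc, hx⟩ =>
    hx ▸ (he _ _).2 (hdia ((he a c).1 hc))

theorem macNeilleDia_bot (hdia : dia ⊥ = ⊥) (hbot : e ⊥ = ⊥) : MacNeilleDia dia e ⊥ = ⊥ :=
  le_bot_iff.1 <| (macNeilleDia_le_map bot_le).trans (by rw [hdia, hbot])

theorem MacNeillePrec.macNeilleDia_sup {prec : B → B → Prop}
    (hdiaAdd : ∀ a₁ b₁ a₂ b₂ : B, prec a₁ b₁ → prec a₂ b₂ → prec (dia (a₁ ⊔ a₂)) (dia b₁ ⊔ dia b₂))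
    (hdia : Monotone dia) (he : ∀ a b : B, e a ≤ e b ↔ a ≤ b)
    (hsup : ∀ a b : B, e (a ⊔ b) = e a ⊔ e b) {α₁ β₁ α₂ β₂ : C}
    (h₁ : MacNeillePrec prec e α₁ β₁) (h₂ : MacNeillePrec prec e α₂ β₂) :
    MacNeillePrec prec e (MacNeilleDia dia e (α₁ ⊔ α₂))
      (MacNeilleDia dia e β₁ ⊔ MacNeilleDia dia e β₂) := by
  obtain ⟨a₁, b₁, hab₁, ha₁, hb₁⟩ := h₁
  obtain ⟨a₂, b₂, hab₂, ha₂, hb₂⟩ := h₂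
  refine ⟨_, _, hdiaAdd a₁ b₁ a₂ b₂ hab₁ hab₂,
    macNeilleDia_le_map (hsup a₁ a₂ ▸ sup_le_sup ha₁ ha₂), ?_⟩
  rw [hsup, ← macNeilleDia_map hdia he, ← macNeilleDia_map hdia he]
  exact sup_le_sup (MacNeilleDia.monotone hb₁) (MacNeilleDia.monotone hb₂)

theorem isGLB_macNeilleDia (A : ContactAlgebra B)
    (hdiaUC : ∀ a : B, IsGLB {d : B | ∃ b : B, A.prec a b ∧ d = dia b} (dia a))
    (he : ∀ a b : B, e a ≤ e b ↔ a ≤ b)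
    (hdense : ∀ γ : C, γ = sSup {x : C | (∃ a : B, x = e a) ∧ x ≤ γ}) (α : C) :
    IsGLB {d : C | ∃ β : C, MacNeillePrec A.prec e α β ∧ d = MacNeilleDia dia e β}
      (MacNeilleDia dia e α) := by
  have hdia := A.monotone_of_isGLB hdiaUC
  have hemono : Monotone e := fun a b => (he a b).2
  refine ⟨fun _ ⟨β, hβ, hd⟩ => hd ▸ MacNeilleDia.monotone (hβ.le A.s5 hemono), fun γ hγ => ?_⟩
  refine le_sInf fun _ ⟨a, ha, hx⟩ => hx ▸ le_map_of_isGLB hdense he (hdiaUC a) ?_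
  rintro _ ⟨b, hab, rfl⟩
  -- `e b` is itself a `≺'`-upper bound of `α`, and `◇'(e b) = e(◇b)`.
  exact macNeilleDia_map hdia he b ▸ hγ ⟨e b, ⟨a, b, hab, ha, le_rfl⟩, rfl⟩

end MacNeilleDia

end

theorem macNeille_of_upperContinuous_modal_compingent_general
    {B C : Type*} [BooleanAlgebra B] [CompleteBooleanAlgebra C]
    (A : CompingentAlgebra B) (dia : B → B)
    -- `dia` is de Vries additive:
    (hdia0 : dia ⊥ = ⊥)
    (hdiaAdd : ∀ a₁ b₁ a₂ b₂ : B, A.prec a₁ b₁ → A.prec a₂ b₂ →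
        A.prec (dia (a₁ ⊔ a₂)) (dia b₁ ⊔ dia b₂))
    -- `dia` is upper continuous:
    (hdiaUC : ∀ a : B, IsGLB {d : B | ∃ b : B, A.prec a b ∧ d = dia b} (dia a))
    -- `e : B → C` is an injective Boolean algebra homomorphism:
    (e : B → C) (heInj : Function.Injective e)
    (heBot : e ⊥ = ⊥) (heTop : e ⊤ = ⊤)
    (heInf : ∀ a b : B, e (a ⊓ b) = e a ⊓ e b)
    (heSup : ∀ a b : B, e (a ⊔ b) = e a ⊔ e b)
    (heCompl : ∀ a : B, e aᶜ = (e a)ᶜ)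
    -- the image of `e` is join-dense and meet-dense in `C`:
    (heJoinDense : ∀ γ : C, γ = sSup {x : C | (∃ a : B, x = e a) ∧ x ≤ γ}) :
    -- `(C, ≺')` is a contact algebra:
    (MacNeillePrec A.prec e ⊥ ⊥ ∧ MacNeillePrec A.prec e ⊤ ⊤) ∧
    (∀ α β γ : C, MacNeillePrec A.prec e α β → MacNeillePrec A.prec e α γ →
        MacNeillePrec A.prec e α (β ⊓ γ)) ∧
    (∀ α β γ : C, MacNeillePrec A.prec e α γ → MacNeillePrec A.prec e β γ →
        MacNeillePrec A.prec e (α ⊔ β) γ) ∧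
    (∀ α β γ δ : C, α ≤ β → MacNeillePrec A.prec e β γ → γ ≤ δ →
        MacNeillePrec A.prec e α δ) ∧
    (∀ α β : C, MacNeillePrec A.prec e α β → α ≤ β) ∧
    (∀ α β : C, MacNeillePrec A.prec e α β → MacNeillePrec A.prec e βᶜ αᶜ) ∧
    -- `(C, ≺')` is compingent (hence, `C` being complete, a de Vries algebra):
    (∀ α β : C, MacNeillePrec A.prec e α β →
        ∃ γ : C, MacNeillePrec A.prec e α γ ∧ MacNeillePrec A.prec e γ β) ∧
    (∀ α : C, α ≠ ⊥ → ∃ β : C, β ≠ ⊥ ∧ MacNeillePrec A.prec e β α) ∧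
    -- `◇'` is de Vries additive:
    (MacNeilleDia dia e ⊥ = ⊥) ∧
    (∀ α₁ β₁ α₂ β₂ : C, MacNeillePrec A.prec e α₁ β₁ → MacNeillePrec A.prec e α₂ β₂ →
        MacNeillePrec A.prec e (MacNeilleDia dia e (α₁ ⊔ α₂))
          (MacNeilleDia dia e β₁ ⊔ MacNeilleDia dia e β₂)) ∧
    -- `◇'` is upper continuous:
    (∀ α : C, IsGLB {d : C | ∃ β : C, MacNeillePrec A.prec e α β ∧ d = MacNeilleDia dia e β}
        (MacNeilleDia dia e α)) ∧
    -- the embedding preserves and reflects `≺` and commutes with `◇`: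
    (∀ a b : B, A.prec a b ↔ MacNeillePrec A.prec e (e a) (e b)) ∧
    (∀ a : B, MacNeilleDia dia e (e a) = e (dia a)) := by
  have he := map_le_map_iff_of_injective_of_map_inf heInj heInf
  have hemono : Monotone e := fun a b => (he a b).2
  have hdia := A.toContactAlgebra.monotone_of_isGLB hdiaUC
  exact ⟨⟨⟨⊥, ⊥, A.s1_bot, heBot.ge, heBot.le⟩, ⟨⊤, ⊤, A.s1_top, heTop.ge, heTop.le⟩⟩,
    fun _ _ _ => MacNeillePrec.inf_right A.toContactAlgebra heInf,
    fun _ _ _ => MacNeillePrec.sup_left A.toContactAlgebra heSup,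
    fun _ _ _ _ => MacNeillePrec.mono,
    fun _ _ h => h.le A.s5 hemono,
    fun _ _ => MacNeillePrec.compl A.toContactAlgebra heCompl,
    fun _ _ => MacNeillePrec.exists_between A,
    fun _ => exists_ne_bot_macNeillePrec A heInj heBot heJoinDense,
    macNeilleDia_bot hdia0 heBot,
    fun _ _ _ _ => MacNeillePrec.macNeilleDia_sup hdiaAdd hdia he heSup,
    isGLB_macNeilleDia A.toContactAlgebra hdiaUC he heJoinDense,
    fun a b => (macNeillePrec_map_map_iff A.toContactAlgebra he a b).symm,
    macNeilleDia_map hdia he⟩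

/-- The MacNeille completion of an upper continuous modal compingent algebra is an
upper continuous modal de Vries algebra, and the embedding preserves and reflects `≺`
and commutes with `◇`. -/
theorem macNeille_of_upperContinuous_modal_compingent
    {B C : Type*} [BooleanAlgebra B] [CompleteBooleanAlgebra C]
    (A : CompingentAlgebra B) (dia : B → B)
    -- `dia` is de Vries additive:
    (hdia0 : dia ⊥ = ⊥)
    (hdiaAdd : ∀ a₁ b₁ a₂ b₂ : B, A.prec a₁ b₁ → A.prec a₂ b₂ →
        A.prec (dia (a₁ ⊔ a₂)) (dia b₁ ⊔ dia b₂))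
    -- `dia` is upper continuous:
    (hdiaUC : ∀ a : B, IsGLB {d : B | ∃ b : B, A.prec a b ∧ d = dia b} (dia a))
    -- `e : B → C` is an injective Boolean algebra homomorphism:
    (e : B → C) (heInj : Function.Injective e)
    (heBot : e ⊥ = ⊥) (heTop : e ⊤ = ⊤)
    (heInf : ∀ a b : B, e (a ⊓ b) = e a ⊓ e b)
    (heSup : ∀ a b : B, e (a ⊔ b) = e a ⊔ e b)
    (heCompl : ∀ a : B, e aᶜ = (e a)ᶜ)
    -- the image of `e` is join-dense and meet-dense in `C`:
    (heJoinDense : ∀ γ : C, γ = sSup {x : C | (∃ a : B, x = e a) ∧ x ≤ γ})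
    (heMeetDense : ∀ γ : C, γ = sInf {x : C | (∃ a : B, x = e a) ∧ γ ≤ x}) :
    -- `(C, ≺')` is a contact algebra:
    (MacNeillePrec A.prec e ⊥ ⊥ ∧ MacNeillePrec A.prec e ⊤ ⊤) ∧
    (∀ α β γ : C, MacNeillePrec A.prec e α β → MacNeillePrec A.prec e α γ →
        MacNeillePrec A.prec e α (β ⊓ γ)) ∧
    (∀ α β γ : C, MacNeillePrec A.prec e α γ → MacNeillePrec A.prec e β γ →
        MacNeillePrec A.prec e (α ⊔ β) γ) ∧
    (∀ α β γ δ : C, α ≤ β → MacNeillePrec A.prec e β γ → γ ≤ δ →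
        MacNeillePrec A.prec e α δ) ∧
    (∀ α β : C, MacNeillePrec A.prec e α β → α ≤ β) ∧
    (∀ α β : C, MacNeillePrec A.prec e α β → MacNeillePrec A.prec e βᶜ αᶜ) ∧
    -- `(C, ≺')` is compingent (hence, `C` being complete, a de Vries algebra):
    (∀ α β : C, MacNeillePrec A.prec e α β →
        ∃ γ : C, MacNeillePrec A.prec e α γ ∧ MacNeillePrec A.prec e γ β) ∧
    (∀ α : C, α ≠ ⊥ → ∃ β : C, β ≠ ⊥ ∧ MacNeillePrec A.prec e β α) ∧
    -- `◇'` is de Vries additive: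
    (MacNeilleDia dia e ⊥ = ⊥) ∧
    (∀ α₁ β₁ α₂ β₂ : C, MacNeillePrec A.prec e α₁ β₁ → MacNeillePrec A.prec e α₂ β₂ →
        MacNeillePrec A.prec e (MacNeilleDia dia e (α₁ ⊔ α₂))
          (MacNeilleDia dia e β₁ ⊔ MacNeilleDia dia e β₂)) ∧
    -- `◇'` is upper continuous:
    (∀ α : C, IsGLB {d : C | ∃ β : C, MacNeillePrec A.prec e α β ∧ d = MacNeilleDia dia e β}
        (MacNeilleDia dia e α)) ∧
    -- the embedding preserves and reflects `≺` and commutes with `◇`: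
    (∀ a b : B, A.prec a b ↔ MacNeillePrec A.prec e (e a) (e b)) ∧
    (∀ a : B, MacNeilleDia dia e (e a) = e (dia a)) :=
  macNeille_of_upperContinuous_modal_compingent_general A dia hdia0 hdiaAdd hdiaUC e heInj heBot
    heTop heInf heSup heCompl heJoinDense
end

section
/- Let X be a set, E a binary relation and T a ternary relation on X, and x ∈ X. Then the following are equivalent: (i) for every subset P ⊆ X, [for all y, x E y implies y ∈ P] holds if and only if [for all y, z, T x y z implies z ∈ P]; (ii) for every z ∈ X, x E z if and only if there exists y with T x y z. (This is the local first-order correspondence of the axiom (A0): [∀]p ↔ ∇(⊥, p).) -/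
/-! Both sides of (A0) say that a valuation of `p` contains a set of points: the `E`-successors of
`x` for `[∀]p`, and the points `z` with `T x y z` for some `y` for `∇(⊥, p)`. Two sets are contained
in the same sets exactly when they are equal. -/

theorem forall_ge_iff_ge_iff_eq {α : Type*} [PartialOrder α] {a b : α} :
    (∀ c, a ≤ c ↔ b ≤ c) ↔ a = b :=
  ⟨eq_of_forall_ge_iff, by rintro rfl _; rfl⟩

theorem forall_forall_imp_mem_iff_subset {X Y : Type*} (R : Y → X → Prop) (P : Set X) :
    (∀ y z, R y z → z ∈ P) ↔ {z | ∃ y, R y z} ⊆ P := by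
  simp only [Set.ofPred_subset, forall_exists_index]
  exact forall_comm

/-- Local first-order correspondence of the axiom (A0): `[∀]p ↔ ∇(⊥, p)`.
At a point `x`, the modal equivalence holds under all valuations iff
`∀ z, x E z ↔ ∃ y, T x y z`. -/
theorem correspondence_A0 {X : Type*} (E : X → X → Prop) (T : X → X → X → Prop) (x : X) :
    (∀ P : Set X, ((∀ y : X, E x y → y ∈ P) ↔ (∀ y z : X, T x y z → z ∈ P))) ↔
    (∀ z : X, E x z ↔ ∃ y : X, T x y z) :=
  calc (∀ P : Set X, ((∀ y : X, E x y → y ∈ P) ↔ (∀ y z : X, T x y z → z ∈ P)))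
      ↔ ∀ P : Set X, {y | E x y} ⊆ P ↔ {z | ∃ y, T x y z} ⊆ P :=
        forall_congr' fun P => iff_congr Iff.rfl (forall_forall_imp_mem_iff_subset (T x) P)
    _ ↔ {y | E x y} = {z | ∃ y, T x y z} := forall_ge_iff_ge_iff_eq
    _ ↔ ∀ z : X, E x z ↔ ∃ y : X, T x y z := Set.ext_iff
end

section
/- Let X be a set, T a ternary relation on X, and x ∈ X. Then the following are equivalent: (i) for all subsets P, Q ⊆ X, if [for all y, z, T x y z implies y ∈ P or z ∈ Q], then x ∈ P or x ∈ Q; (ii) T x x x. (This is the local first-order correspondence of the axiom (A4): ∇(p, q) → (p ∨ q).) -/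
/-- Local first-order correspondence of the axiom (A4): `∇(p, q) → (p ∨ q)`.
At a point `x`, the modal formula holds under all valuations iff `T x x x`. -/
theorem correspondence_A4 {X : Type*} (T : X → X → X → Prop) (x : X) :
    (∀ P Q : Set X, (∀ y z : X, T x y z → y ∈ P ∨ z ∈ Q) → x ∈ P ∨ x ∈ Q) ↔
    T x x x := by
  refine ⟨fun h => ?_, fun hxxx P Q h => h x x hxxx⟩
  by_contra hxxx
  -- the valuation p = q = X \ {x} falsifies the axiom at x unless T x x x
  have hbox : ∀ y z : X, T x y z → y ∈ ({x}ᶜ : Set X) ∨ z ∈ ({x}ᶜ : Set X) := by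
    rintro y z hxyz
    by_contra! hyz
    simp only [Set.mem_compl_iff, Set.mem_singleton_iff, not_not] at hyz
    obtain ⟨rfl, rfl⟩ := hyz
    exact hxxx hxyz
  simpa using h _ _ hbox
end

section
/- Let X be a set, E a binary relation and T a ternary relation on X, and x ∈ X. Then the following are equivalent: (i) for all subsets P, Q ⊆ X, if [for all y, z, T x y z implies y ∈ P or z ∈ Q], then for every w with x E w and all y, z, T w y z implies y ∈ P or z ∈ Q; (ii) for all y, z, w ∈ X, if x E w and T w y z, then T x y z. (This is the local first-order correspondence of the left-to-right implication of the axiom (A10): ∇(p, q) → [∀]∇(p, q).) -/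
/-!
The valuation `P = X \ {y}`, `Q = X \ {z}` makes `∇(p, q)` true at a point exactly when the
point is not `T`-related to `(y, z)`, so `∇(p, q)` at one point entails it at another under all
valuations exactly when the `T`-successor pairs of the second are among those of the first.
-/

/-- `x ⊨ ∇(p, q)` with `R = T x` and `p, q` valued by `P, Q`. -/
def BinaryBox {X : Type*} (R : X → X → Prop) (P Q : Set X) : Prop :=
  ∀ y z : X, R y z → y ∈ P ∨ z ∈ Q

theorem binaryBox_imp_binaryBox_iff {X : Type*} {R S : X → X → Prop} :
    (∀ P Q : Set X, BinaryBox R P Q → BinaryBox S P Q) ↔ S ≤ R := by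
  refine ⟨fun h y z hS => ?_, fun hSR P Q hR y z hS => hR y z (hSR y z hS)⟩
  by_contra hR
  have hbox : BinaryBox R {y}ᶜ {z}ᶜ := by
    intro y' z' hR'
    by_contra! hmem
    simp only [Set.mem_compl_singleton_iff, ne_eq, not_not] at hmem
    exact hR (hmem.1 ▸ hmem.2 ▸ hR')
  simpa using h _ _ hbox y z hS

/-- Local first-order correspondence of the left-to-right implication of the axiom
(A10): `∇(p, q) → [∀]∇(p, q)`. At a point `x`, the modal formula holds under all
valuations iff `∀ y z w, x E w → T w y z → T x y z`. -/
theorem correspondence_A10 {X : Type*} (E : X → X → Prop) (T : X → X → X → Prop) (x : X) :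
    (∀ P Q : Set X, (∀ y z : X, T x y z → y ∈ P ∨ z ∈ Q) →
      (∀ w : X, E x w → ∀ y z : X, T w y z → y ∈ P ∨ z ∈ Q)) ↔
    (∀ y z w : X, E x w → T w y z → T x y z) := by
  calc _ ↔ ∀ w, E x w → ∀ P Q : Set X, BinaryBox (T x) P Q → BinaryBox (T w) P Q :=
        ⟨fun h w hw P Q hP => h P Q hP w hw, fun h P Q hP w hw => h w hw P Q hP⟩
    _ ↔ ∀ w, E x w → T w ≤ T x := by simp only [binaryBox_imp_binaryBox_iff]
    _ ↔ _ := ⟨fun h y z w hw hT => h w hw y z hT, fun h w hw y z hT => h y z w hw hT⟩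
end

section
/- Let X be a set, T a ternary relation and S a binary relation on X, and x ∈ X. Then the following are equivalent: (i) for all subsets P, Q ⊆ X, if [for all y, z, T x y z implies y ∈ P or z ∈ Q], then for all y, z with T x y z, either there exists u with y S u and u ∈ P, or for all w, z S w implies w ∈ Q; (ii) for all y, z, w ∈ X, if T x y z and z S w, then there exists u with T x u w and y S u. (This is the local first-order correspondence of the axiom (Add): ∇(p, q) → ∇(◇p, □q).) -/
/-- Local first-order correspondence of the axiom (Add): `∇(p, q) → ∇(◇p, □q)`.
At a point `x`, the modal formula holds under all valuations iff
`∀ y z w, T x y z → z S w → ∃ u, T x u w ∧ y S u`. -/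
theorem correspondence_Add {X : Type*} (T : X → X → X → Prop) (S : X → X → Prop) (x : X) :
    (∀ P Q : Set X, (∀ y z : X, T x y z → y ∈ P ∨ z ∈ Q) →
      (∀ y z : X, T x y z →
        (∃ u : X, S y u ∧ u ∈ P) ∨ (∀ w : X, S z w → w ∈ Q))) ↔
    (∀ y z w : X, T x y z → S z w → ∃ u : X, T x u w ∧ S y u) := by
  constructor
  · intro hAdd y z w hT hS
    -- The minimal valuation falsifying `◇p` at `y`: `p` fails at the `S`-successors of `y`,
    -- and `q` holds exactly where `∇(p, q)` at `x` forces it to.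
    have hNabla : ∀ y' z', T x y' z' → y' ∈ {u | ¬ S y u} ∨ z' ∈ {w | ∃ u, S y u ∧ T x u w} :=
      fun y' z' hT' => (em (S y y')).symm.imp id fun hy => ⟨y', hy, hT'⟩
    rcases hAdd _ _ hNabla y z hT with ⟨u, hSu, hnSu⟩ | hBox
    · exact absurd hSu hnSu
    · obtain ⟨u, hSu, hTu⟩ := hBox w hS
      exact ⟨u, hTu, hSu⟩
  · intro hFrame P Q hNabla y z hT
    refine or_iff_not_imp_left.mpr fun hDia w hS => ?_
    obtain ⟨u, hTu, hSu⟩ := hFrame y z w hT hS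
    exact (hNabla u w hTu).resolve_left fun hu => hDia ⟨u, hSu, hu⟩
end

section
/- Let (X, T, S) be a simple MS²IC-frame and define a binary relation R_T on X by x R_T y iff T x x y. Then (X, R_T, S) is a modal contact frame (R_T is reflexive and symmetric, and x R_T y together with x S z imply that there is w with z R_T w and y S w), and moreover for all x, y, z ∈ X: T x y z if and only if y R_T z (i.e., T = T_{R_T}). -/
/-- An MS²IC-frame: a set with a ternary relation `T` and a binary relation `S`
satisfying conditions (1)-(5), where `x E_T y` abbreviates `∃ z, T x y z`. -/
structure IsMS2ICFrame {X : Type*} (T : X → X → X → Prop) (S : X → X → Prop) : Prop where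
  refl : ∀ x : X, T x x x
  symm : ∀ x y z : X, T x y z → T x z y
  equiv : Equivalence (fun x y : X => ∃ z : X, T x y z)
  shift : ∀ x y z w : X, T x y z → (∃ v : X, T x w v) → T w y z
  comm : ∀ x y z w : X, T x y z → S y w → ∃ u : X, T x w u ∧ S z u

/-- A modal contact frame: a nonempty set with a reflexive symmetric relation `R`
and a relation `S` satisfying the commuting condition. -/
structure IsModalContactFrame {X : Type*} (R S : X → X → Prop) : Prop where
  nonempty : Nonempty X
  refl : ∀ x : X, R x x
  symm : ∀ x y : X, R x y → R y x
  comm : ∀ x y z : X, R x y → S x z → ∃ w : X, R z w ∧ S y w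

namespace IsMS2ICFrame

variable {X : Type*} {T : X → X → X → Prop} {S : X → X → Prop}

theorem apply_iff_apply_self (hF : IsMS2ICFrame T S) {x y : X} (hxy : ∃ v, T x y v) (z : X) :
    T x y z ↔ T y y z :=
  ⟨fun h => hF.shift x y z y h hxy, fun h => hF.shift y y z x h (hF.equiv.symm hxy)⟩

theorem isModalContactFrame (hF : IsMS2ICFrame T S) (hne : Nonempty X) :
    IsModalContactFrame (fun x y : X => T x x y) S where
  nonempty := hne
  refl := hF.refl
  symm x y h := by
    have hyx : T x y x := hF.symm x x y h
    exact (hF.apply_iff_apply_self ⟨x, hyx⟩ x).mp hyx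
  comm x y z h hs := by
    obtain ⟨u, hzu, hyu⟩ := hF.comm x x y z h hs
    exact ⟨u, (hF.apply_iff_apply_self ⟨u, hzu⟩ u).mp hzu, hyu⟩

end IsMS2ICFrame

/-- If `(X, T, S)` is a simple MS²IC-frame (all points are `E_T`-related), then
`(X, R_T, S)` with `x R_T y ↔ T x x y` is a modal contact frame, and
`T = T_{R_T}`, i.e. `T x y z ↔ T y y z`. -/
theorem simple_MS2IC_to_modalContactFrame {X : Type*}
    (T : X → X → X → Prop) (S : X → X → Prop)
    (hF : IsMS2ICFrame T S) (hne : Nonempty X)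
    (hsimple : ∀ x y : X, ∃ z : X, T x y z) :
    IsModalContactFrame (fun x y : X => T x x y) S ∧
    (∀ x y z : X, T x y z ↔ T y y z) :=
  ⟨hF.isModalContactFrame hne, fun x y => hF.apply_iff_apply_self (hsimple x y)⟩
end

section
/- Let (X, R, S) be a modal contact frame and define the ternary relation T_R on X by T_R x y z iff y R z. Then (X, T_R, S) is a simple MS²IC-frame, and for all x, y ∈ X: x R y if and only if T_R x x y (i.e., R = R_{T_R}). -/
/-- The ternary relation `T_R` associated with a binary relation `R`:
`T_R x y z` iff `y R z`. -/
def ternOf {X : Type*} (R : X → X → Prop) : X → X → X → Prop := fun _ y z => R y z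

/-!
`T_R x y z` does not depend on `x`, so (4) is trivial and the remaining MS²IC axioms are
statements about `R`: reflexivity of `R` makes any two points `E_{T_R}`-related, giving (3)
and simplicity, and (5) is exactly the commuting condition of the contact frame.
-/

section TernOf

variable {X : Type*} {R : X → X → Prop}

theorem exists_ternOf_of_reflexive (hR : ∀ x, R x x) (x y : X) : ∃ z, ternOf R x y z :=
  ⟨y, hR y⟩

theorem isMS2ICFrame_ternOf {S : X → X → Prop} (hrefl : ∀ x, R x x)
    (hsymm : ∀ x y, R x y → R y x)
    (hcomm : ∀ x y z, R x y → S x z → ∃ w, R z w ∧ S y w) : IsMS2ICFrame (ternOf R) S where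
  refl := hrefl
  symm _ := hsymm
  equiv :=
    ⟨fun _ => exists_ternOf_of_reflexive hrefl _ _, fun _ => exists_ternOf_of_reflexive hrefl _ _,
      fun _ _ => exists_ternOf_of_reflexive hrefl _ _⟩
  shift _ _ _ _ hyz _ := hyz
  comm _ := hcomm

end TernOf

/-- If `(X, R, S)` is a modal contact frame, then `(X, T_R, S)` is a simple
MS²IC-frame (any two points are `E_{T_R}`-related), and `R = R_{T_R}`, i.e.
`x R y ↔ T_R x x y`. -/
theorem modalContactFrame_to_simple_MS2IC {X : Type*}
    (R S : X → X → Prop) (h : IsModalContactFrame R S) :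
    IsMS2ICFrame (ternOf R) S ∧
    (∀ x y : X, ∃ z : X, ternOf R x y z) ∧
    (∀ x y : X, R x y ↔ ternOf R x x y) :=
  ⟨isMS2ICFrame_ternOf h.refl h.symm h.comm, exists_ternOf_of_reflexive h.refl,
    fun _ _ => Iff.rfl⟩
end

section
/- Let (X, R, S) be a modal contact frame. Let X' = {(x₁, x₂) ∈ X × X : x₁ R x₂}, define (x₁, x₂) R' (y₁, y₂) iff {x₁, x₂} = {y₁, y₂} (as sets), and (x₁, x₂) S' (y₁, y₂) iff x₁ S y₁ and x₂ S y₂. Then (X', R', S') is a modal contact frame, and the map f : X' → X given by f(x₁, x₂) = x₁ is a regular stable p-morphism from (X', R', S') to (X, R, S). -/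
/-- The carrier of the bisimulation expansion used for (ρ6):
pairs `(x₁, x₂)` with `x₁ R x₂`. -/
def PairFrame {X : Type*} (R : X → X → Prop) : Type _ := {p : X × X // R p.1 p.2}

/-- `(x₁, x₂) R' (y₁, y₂)` iff `{x₁, x₂} = {y₁, y₂}` as sets. -/
def pairR {X : Type*} (R : X → X → Prop) (p q : PairFrame R) : Prop :=
  ({p.1.1, p.1.2} : Set X) = ({q.1.1, q.1.2} : Set X)

/-- `(x₁, x₂) S' (y₁, y₂)` iff `x₁ S y₁` and `x₂ S y₂`. -/
def pairS {X : Type*} {R : X → X → Prop} (S : X → X → Prop) (p q : PairFrame R) : Prop :=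
  S p.1.1 q.1.1 ∧ S p.1.2 q.1.2

/-!
A pair is `R'`-related exactly to itself and to its reversal, so the commuting condition of the
pair frame is witnessed by the `S'`-successor itself or by its reversal. An `S`-step out of the
first coordinate of `(x₁, x₂)` lifts to the pair frame because `x₁ R x₂` and the commuting
condition of `(X, R, S)` provide a matching `S`-step out of `x₂`.
-/

namespace PairFrame

variable {X : Type*} {R : X → X → Prop}

def swap (hR : ∀ x y : X, R x y → R y x) (p : PairFrame R) : PairFrame R :=
  ⟨p.1.swap, hR _ _ p.2⟩

theorem pairR_iff {p q : PairFrame R} :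
    pairR R p q ↔ p.1.1 = q.1.1 ∧ p.1.2 = q.1.2 ∨ p.1.1 = q.1.2 ∧ p.1.2 = q.1.1 :=
  Set.pair_eq_pair_iff

theorem pairR_swap (hR : ∀ x y : X, R x y → R y x) (p : PairFrame R) : pairR R p (p.swap hR) :=
  Set.pair_comm _ _

theorem exists_pairR_pairS_of_pairR_of_pairS (hR : ∀ x y : X, R x y → R y x)
    {S : X → X → Prop} {p q r : PairFrame R} (hpq : pairR R p q) (hpr : pairS S p r) :
    ∃ w, pairR R r w ∧ pairS S q w := by
  rcases pairR_iff.1 hpq with ⟨h₁, h₂⟩ | ⟨h₁, h₂⟩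
  · exact ⟨r, rfl, h₁ ▸ hpr.1, h₂ ▸ hpr.2⟩
  · exact ⟨r.swap hR, pairR_swap hR r, h₂ ▸ hpr.2, h₁ ▸ hpr.1⟩

theorem rel_fst_of_pairR (hR : ∀ x : X, R x x) {p q : PairFrame R} (hpq : pairR R p q) :
    R p.1.1 q.1.1 := by
  rcases pairR_iff.1 hpq with ⟨h₁, -⟩ | ⟨-, h₂⟩
  · exact h₁ ▸ hR _
  · exact h₂ ▸ p.2

theorem exists_pairR_of_rel (hR : ∀ x y : X, R x y → R y x) {x y : X} (hxy : R x y) :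
    ∃ p q : PairFrame R, pairR R p q ∧ p.1.1 = x ∧ q.1.1 = y :=
  ⟨⟨(x, y), hxy⟩, swap hR ⟨(x, y), hxy⟩, pairR_swap hR _, rfl, rfl⟩

theorem exists_pairS_fst_eq {S : X → X → Prop}
    (hcomm : ∀ x y z : X, R x y → S x z → ∃ w : X, R z w ∧ S y w)
    (p : PairFrame R) {y : X} (hy : S p.1.1 y) :
    ∃ q : PairFrame R, pairS (R := R) S p q ∧ q.1.1 = y := by
  obtain ⟨w, hyw, hw⟩ := hcomm p.1.1 p.1.2 y p.2 hy
  exact ⟨⟨(y, w), hyw⟩, ⟨hy, hw⟩, rfl⟩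

end PairFrame

theorem IsModalContactFrame.pair {X : Type*} {R S : X → X → Prop}
    (h : IsModalContactFrame R S) : IsModalContactFrame (pairR R) (pairS (R := R) S) where
  nonempty := h.nonempty.map fun x => ⟨(x, x), h.refl x⟩
  refl _ := rfl
  symm _ _ := Eq.symm
  comm _ _ _ := PairFrame.exists_pairR_pairS_of_pairR_of_pairS h.symm

/-- The pair construction yields a modal contact frame, and the first projection is
a regular stable p-morphism onto the original frame. -/
theorem pairFrame_modalContact_and_projection {X : Type*}
    (R S : X → X → Prop) (h : IsModalContactFrame R S) :
    IsModalContactFrame (pairR R) (pairS (R := R) S) ∧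
    -- `f (x₁, x₂) = x₁` is a regular stable p-morphism:
    ((∀ p q : PairFrame R, pairS (R := R) S p q → S p.1.1 q.1.1) ∧
     (∀ (p : PairFrame R) (y : X), S p.1.1 y →
        ∃ q : PairFrame R, pairS (R := R) S p q ∧ q.1.1 = y) ∧
     (∀ p q : PairFrame R, pairR R p q → R p.1.1 q.1.1) ∧
     (∀ x y : X, R x y → ∃ p q : PairFrame R, pairR R p q ∧ p.1.1 = x ∧ q.1.1 = y)) :=
  ⟨h.pair, fun _ _ hpq => hpq.1, fun p _ => PairFrame.exists_pairS_fst_eq h.comm p,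
    fun _ _ => PairFrame.rel_fst_of_pairR h.refl, fun _ _ => PairFrame.exists_pairR_of_rel h.symm⟩
end

section
/- Let (X, R, S) be a modal contact frame. Let X' = {1, 2} × X, define (i, x) R' (j, y) iff either i = j = 1 and x = y, or i = j = 2 and x R y; and define (i, x) S' (j, y) iff i = j and x S y. Then (X', R', S') is a modal contact frame, and the map f : X' → X given by f(i, x) = x is a regular stable p-morphism from (X', R', S') to (X, R, S). -/
/-- The relation `R'` on `{1, 2} × X` (here `Fin 2 × X`, with `0` playing the role
of the first copy and `1` of the second): `(i, x) R' (j, y)` iff either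
`i = j = 1` and `x = y`, or `i = j = 2` and `x R y`. -/
def twoCopyR {X : Type*} (R : X → X → Prop) (p q : Fin 2 × X) : Prop :=
  (p.1 = 0 ∧ q.1 = 0 ∧ p.2 = q.2) ∨ (p.1 = 1 ∧ q.1 = 1 ∧ R p.2 q.2)

/-- The relation `S'` on `{1, 2} × X`: `(i, x) S' (j, y)` iff `i = j` and `x S y`. -/
def twoCopyS {X : Type*} (S : X → X → Prop) (p q : Fin 2 × X) : Prop :=
  p.1 = q.1 ∧ S p.2 q.2

/-! The first copy carries the identity relation, on which the commuting condition holds with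
`w = z`; the second copy is the original frame. Both copies project onto `X`, and the second one
alone already lifts every `R`-edge. -/

section TwoCopy

variable {X : Type*} {R S : X → X → Prop}

theorem twoCopyR_refl (hR : ∀ x, R x x) (p : Fin 2 × X) : twoCopyR R p p := by
  obtain ⟨i, x⟩ := p
  fin_cases i
  · exact Or.inl ⟨rfl, rfl, rfl⟩
  · exact Or.inr ⟨rfl, rfl, hR x⟩

theorem twoCopyR_symm (hR : ∀ x y, R x y → R y x) {p q : Fin 2 × X} :
    twoCopyR R p q → twoCopyR R q p := by
  rintro (⟨hp, hq, hpq⟩ | ⟨hp, hq, hpq⟩)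
  · exact Or.inl ⟨hq, hp, hpq.symm⟩
  · exact Or.inr ⟨hq, hp, hR _ _ hpq⟩

theorem twoCopyR_twoCopyS_comm (h : ∀ x y z, R x y → S x z → ∃ w, R z w ∧ S y w)
    {p q r : Fin 2 × X} (hpq : twoCopyR R p q) (hpr : twoCopyS S p r) :
    ∃ s, twoCopyR R r s ∧ twoCopyS S q s := by
  obtain ⟨hcopy, hS⟩ := hpr
  rcases hpq with ⟨hp, hq, hpq⟩ | ⟨hp, hq, hpq⟩
  · exact ⟨r, Or.inl ⟨hcopy ▸ hp, hcopy ▸ hp, rfl⟩, hq.trans (hp ▸ hcopy), hpq ▸ hS⟩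
  · obtain ⟨w, hRw, hSw⟩ := h _ _ _ hpq hS
    exact ⟨(r.1, w), Or.inr ⟨hcopy ▸ hp, hcopy ▸ hp, hRw⟩, hq.trans (hp ▸ hcopy), hSw⟩

theorem IsModalContactFrame.twoCopy (h : IsModalContactFrame R S) :
    IsModalContactFrame (twoCopyR R) (twoCopyS S) where
  nonempty := h.nonempty.map fun x => (0, x)
  refl := twoCopyR_refl h.refl
  symm _ _ := twoCopyR_symm h.symm
  comm _ _ _ := twoCopyR_twoCopyS_comm h.comm

theorem rel_snd_of_twoCopyR (hR : ∀ x, R x x) {p q : Fin 2 × X} (hpq : twoCopyR R p q) :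
    R p.2 q.2 := by
  rcases hpq with ⟨-, -, hpq⟩ | ⟨-, -, hpq⟩
  · exact hpq ▸ hR p.2
  · exact hpq

end TwoCopy

/-- The two-copy construction yields a modal contact frame, and the second
projection `f (i, x) = x` is a regular stable p-morphism onto the original
frame. -/
theorem twoCopy_modalContact_and_projection {X : Type*}
    (R S : X → X → Prop) (h : IsModalContactFrame R S) :
    IsModalContactFrame (twoCopyR R) (twoCopyS S) ∧
    -- `f (i, x) = x` is a regular stable p-morphism:
    ((∀ p q : Fin 2 × X, twoCopyS S p q → S p.2 q.2) ∧
     (∀ (p : Fin 2 × X) (y : X), S p.2 y →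
        ∃ q : Fin 2 × X, twoCopyS S p q ∧ q.2 = y) ∧
     (∀ p q : Fin 2 × X, twoCopyR R p q → R p.2 q.2) ∧
     (∀ x y : X, R x y → ∃ p q : Fin 2 × X, twoCopyR R p q ∧ p.2 = x ∧ q.2 = y)) := by
  refine ⟨h.twoCopy, fun _ _ => And.right, fun p y hy => ⟨(p.1, y), ⟨rfl, hy⟩, rfl⟩,
    fun _ _ => rel_snd_of_twoCopyR h.refl,
    fun x y hxy => ⟨(1, x), (1, y), Or.inr ⟨rfl, rfl, hxy⟩, rfl, rfl⟩⟩
end
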